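/- For θ ∈ (0,π), β ∈ [0,π), and all x, u ∈ ℝ with x < 0 and u < 0: φ^g(x, β, θ) ≥ φ^g(x, 0, θ) = lim_{u'↗0} φ(x, u', θ) > φ(x, u, θ), where φ(x, u, θ) = f_θ(u − x) − f_θ(u + x) and φ^g(x, β, θ) = f_θ(iβ − x) − f_θ(iβ + x). -/

import Mathlib

open Real Complex Filter
open scoped ComplexConjugate

/-!
Along the imaginary direction, `β ↦ φ^g(x, β, θ)` has derivative `2 Im f_θ'(iβ + x)`, because
`f_θ'(iβ − x)` is the complex conjugate of `f_θ'(iβ + x)`; the sign of this imaginary part is that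
of `−sin β sinh x ≥ 0`, so `φ^g` increases on `[0, π)`. Along the real line,
`∂ᵤφ(x, u, θ) = f_θ'(u − x) − f_θ'(u + x) > 0` for `u < 0`, since `f_θ'` decreases in `cosh` and
`cosh (u + x) − cosh (u − x) = 2 sinh u sinh x > 0`; as `φ^g(x, 0, θ) = φ(x, 0, θ)`, continuity of
`φ` at `u = 0` gives the remaining two claims.
-/

/-- `f_θ'`, as a function on `ℂ`. -/
noncomputable def angleKernel (θ : ℝ) (z : ℂ) : ℂ :=
  Complex.sin θ / (2 * (Complex.cosh z - Complex.cos θ))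

lemma cosh_I_mul_sub_ofReal (b x : ℝ) :
    Complex.cosh (I * b - x) = conj (Complex.cosh (I * b + x)) := by
  rw [← Complex.cosh_conj, ← Complex.cosh_neg]
  congr 1
  apply Complex.ext <;> simp

lemma im_cosh_I_mul_add_ofReal (b x : ℝ) :
    (Complex.cosh (I * b + x)).im = Real.sin b * Real.sinh x := by
  rw [Complex.cosh_add, mul_comm I, Complex.cosh_mul_I, Complex.sinh_mul_I]
  simp [← Complex.ofReal_cos, ← Complex.ofReal_sin, ← Complex.ofReal_cosh, ← Complex.ofReal_sinh]

lemma angleKernel_I_mul_sub_ofReal (θ b x : ℝ) :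
    angleKernel θ (I * b - x) = conj (angleKernel θ (I * b + x)) := by
  simp only [angleKernel, cosh_I_mul_sub_ofReal, ← Complex.ofReal_sin, ← Complex.ofReal_cos,
    map_div₀, map_mul, map_sub, Complex.conj_ofReal, map_ofNat]

lemma im_angleKernel_I_mul_add_ofReal_nonneg {θ b x : ℝ} (hθ : 0 ≤ Real.sin θ)
    (hb₀ : 0 ≤ b) (hbπ : b ≤ π) (hx : x ≤ 0) : 0 ≤ (angleKernel θ (I * b + x)).im := by
  have him : (2 * (Complex.cosh (I * b + x) - Complex.cos θ)).im =
      2 * (Real.sin b * Real.sinh x) := by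
    simp [← im_cosh_I_mul_add_ofReal, ← Complex.ofReal_cos]
  rw [angleKernel, ← Complex.ofReal_sin, div_eq_mul_inv, Complex.im_ofReal_mul, Complex.inv_im, him]
  have hsign : Real.sin b * Real.sinh x ≤ 0 :=
    mul_nonpos_of_nonneg_of_nonpos (Real.sin_nonneg_of_nonneg_of_le_pi hb₀ hbπ)
      (Real.sinh_nonpos_iff.mpr hx)
  exact mul_nonneg hθ (div_nonneg (by linarith) (Complex.normSq_nonneg _))

/-- `φ(x, u, θ)` for `f = f_θ`. -/
def kiteHalfAngle (f : ℝ → ℝ) (x u : ℝ) : ℝ := f (u - x) - f (u + x)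

/-- `φ^g(x, β, θ)` for `F` the continuation of `f_θ`. -/
def kiteHalfAngleGen (F : ℂ → ℂ) (x β : ℝ) : ℝ := (F (I * β - x) - F (I * β + x)).re

section Generalized

variable {θ x : ℝ} {F : ℂ → ℂ}

lemma hasDerivAt_kiteHalfAngleGen
    (hF : ∀ z : ℂ, z.re ≠ 0 → -π < z.im → z.im < π → HasDerivAt F (angleKernel θ z) z)
    (hx : x ≠ 0) {β : ℝ} (hβ : β ∈ Set.Ioo (-π) π) :
    HasDerivAt (kiteHalfAngleGen F x) (2 * (angleKernel θ (I * β + x)).im) β := by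
  have hF' : ∀ c : ℝ, c ≠ 0 → HasDerivAt (fun b : ℝ => F (I * b + c))
      (angleKernel θ (I * β + c) * I) β := fun c hc => by
    have hline : HasDerivAt (fun b : ℂ => I * b + c) I β := by
      simpa using ((hasDerivAt_id (β : ℂ)).const_mul I).add_const (c : ℂ)
    exact ((hF _ (by simpa using hc) (by simpa using hβ.1) (by simpa using hβ.2)).comp _
      hline).comp_ofReal
  have hsub := (hF' (-x) (neg_ne_zero.mpr hx)).sub (hF' x hx)
  simp only [Complex.ofReal_neg, ← sub_eq_add_neg, angleKernel_I_mul_sub_ofReal] at hsub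
  refine ((Complex.reCLM.hasFDerivAt.comp_hasDerivAt β hsub).congr_deriv ?_ :)
  simp only [reCLM_apply, sub_re, mul_re, conj_re, conj_im, I_re, I_im]
  ring

lemma monotoneOn_kiteHalfAngleGen (hθ : 0 ≤ Real.sin θ)
    (hF : ∀ z : ℂ, z.re ≠ 0 → -π < z.im → z.im < π → HasDerivAt F (angleKernel θ z) z)
    (hx : x < 0) : MonotoneOn (kiteHalfAngleGen F x) (Set.Ico 0 π) := by
  have hderiv : ∀ β ∈ Set.Ico 0 π,
      HasDerivAt (kiteHalfAngleGen F x) (2 * (angleKernel θ (I * β + x)).im) β :=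
    fun β hβ => hasDerivAt_kiteHalfAngleGen hF hx.ne ⟨by linarith [hβ.1, pi_pos], hβ.2⟩
  refine monotoneOn_of_hasDerivWithinAt_nonneg (f' := fun β => 2 * (angleKernel θ (I * β + x)).im)
    (convex_Ico 0 π)
    (fun β hβ => (hderiv β hβ).continuousAt.continuousWithinAt) (fun β hβ => ?_) (fun β hβ => ?_)
  all_goals rw [interior_Ico] at hβ
  · exact (hderiv β (Set.Ioo_subset_Ico_self hβ)).hasDerivWithinAt
  · exact mul_nonneg zero_le_two
      (im_angleKernel_I_mul_add_ofReal_nonneg hθ hβ.1.le hβ.2.le hx.le)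

end Generalized

lemma cosh_sub_lt_cosh_add {u x : ℝ} (hu : u < 0) (hx : x < 0) :
    Real.cosh (u - x) < Real.cosh (u + x) := by
  have hdiff : Real.cosh (u + x) - Real.cosh (u - x) = 2 * Real.sinh u * Real.sinh x := by
    rw [Real.cosh_add, Real.cosh_sub]; ring
  linarith [mul_pos_of_neg_of_neg (Real.sinh_neg_iff.mpr hu) (Real.sinh_neg_iff.mpr hx)]

lemma div_cosh_sub_lt_div_cosh_sub {s c a b : ℝ} (hs : 0 < s) (hc : c < 1)
    (hab : Real.cosh a < Real.cosh b) :
    s / (2 * (Real.cosh b - c)) < s / (2 * (Real.cosh a - c)) :=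
  div_lt_div_of_pos_left hs (by linarith [Real.one_le_cosh a]) (by linarith)

lemma strictMonoOn_kiteHalfAngle {θ x : ℝ} {f : ℝ → ℝ} (hθ : θ ∈ Set.Ioo 0 π)
    (hf : ∀ t, HasDerivAt f (Real.sin θ / (2 * (Real.cosh t - Real.cos θ))) t) (hx : x < 0) :
    StrictMonoOn (kiteHalfAngle f x) (Set.Iic 0) := by
  have hderiv : ∀ u, HasDerivAt (kiteHalfAngle f x)
      (Real.sin θ / (2 * (Real.cosh (u - x) - Real.cos θ))
        - Real.sin θ / (2 * (Real.cosh (u + x) - Real.cos θ))) u := fun u =>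
    ((hf (u - x)).comp u ((hasDerivAt_id u).sub_const x)).sub
      ((hf (u + x)).comp u ((hasDerivAt_id u).add_const x)) |>.congr_deriv (by simp)
  refine strictMonoOn_of_hasDerivWithinAt_pos (convex_Iic 0)
    (fun u _ => (hderiv u).continuousAt.continuousWithinAt)
    (fun u _ => (hderiv u).hasDerivWithinAt) (fun u hu => ?_)
  rw [interior_Iic] at hu
  have hcos : Real.cos θ < 1 := by
    simpa using Real.cos_lt_cos_of_nonneg_of_le_pi le_rfl hθ.2.le hθ.1
  exact sub_pos.mpr <| div_cosh_sub_lt_div_cosh_sub (Real.sin_pos_of_pos_of_lt_pi hθ.1 hθ.2) hcos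
    (cosh_sub_lt_cosh_add hu hx)

theorem generalized_angle_comparison_general
    (θ : ℝ) (hθ : θ ∈ Set.Ioo 0 Real.pi) (f : ℝ → ℝ) (F : ℂ → ℂ)
    (hderiv : ∀ x : ℝ, HasDerivAt f (Real.sin θ / (2 * (Real.cosh x - Real.cos θ))) x)
    (hFreal : ∀ x : ℝ, x ≠ 0 → F (x : ℂ) = (f x : ℂ))
    (hF : ∀ z : ℂ, z.re ≠ 0 → -Real.pi < z.im → z.im < Real.pi →
      HasDerivAt F (Complex.sin (θ : ℂ) / (2 * (Complex.cosh z - Complex.cos (θ : ℂ)))) z) :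
    ∀ x u β : ℝ, x < 0 → u < 0 → 0 ≤ β → β < Real.pi →
      ((F (Complex.I * (β : ℂ) - (x : ℂ)) - F (Complex.I * (β : ℂ) + (x : ℂ))).re ≥
        (F (Complex.I * (0 : ℂ) - (x : ℂ)) - F (Complex.I * (0 : ℂ) + (x : ℂ))).re) ∧
      (Tendsto (fun u' : ℝ => f (u' - x) - f (u' + x)) (nhdsWithin 0 (Set.Iio 0))
        (nhds ((F (Complex.I * (0 : ℂ) - (x : ℂ)) - F (Complex.I * (0 : ℂ) + (x : ℂ))).re))) ∧
      ((F (Complex.I * (0 : ℂ) - (x : ℂ)) - F (Complex.I * (0 : ℂ) + (x : ℂ))).re >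
        f (u - x) - f (u + x)) := by
  intro x u β hx hu hβ₀ hβπ
  have hgen₀ : kiteHalfAngleGen F x 0 = (F (I * 0 - x) - F (I * 0 + x)).re := by
    simp [kiteHalfAngleGen]
  have hreal : kiteHalfAngleGen F x 0 = kiteHalfAngle f x 0 := by
    simp [kiteHalfAngleGen, kiteHalfAngle, ← Complex.ofReal_neg, hFreal, hx.ne]
  have hcont : Continuous (kiteHalfAngle f x) := by
    have hfc : Continuous f := continuous_iff_continuousAt.mpr fun t => (hderiv t).continuousAt
    unfold kiteHalfAngle; fun_prop
  rw [← hgen₀]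
  refine ⟨?_, ?_, ?_⟩
  · exact monotoneOn_kiteHalfAngleGen (Real.sin_nonneg_of_nonneg_of_le_pi hθ.1.le hθ.2.le) hF hx
      ⟨le_rfl, by linarith⟩ ⟨hβ₀, hβπ⟩ hβ₀
  all_goals rw [hreal]
  · exact hcont.continuousAt.tendsto.mono_left nhdsWithin_le_nhds
  · exact strictMonoOn_kiteHalfAngle hθ hderiv hx hu.le Set.self_mem_Iic hu

/-- Let `θ ∈ (0,π)`, let `f_θ : ℝ → (0,π−θ)` have derivative
`sin θ/(2(cosh x − cos θ))`, and let `F` be its analytic continuation to the strip minus the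
imaginary segments.  Set `φ(x,u,θ) = f_θ(u−x) − f_θ(u+x)` and
`φ^g(x,β,θ) = f_θ(iβ−x) − f_θ(iβ+x)`.  Then for all `x < 0`, `u < 0` and `β ∈ [0,π)`:
`φ^g(x,β,θ) ≥ φ^g(x,0,θ) = lim_{u'↗0} φ(x,u',θ) > φ(x,u,θ)`. -/
theorem generalized_angle_comparison
    (θ : ℝ) (hθ : θ ∈ Set.Ioo 0 Real.pi) (f : ℝ → ℝ) (F : ℂ → ℂ)
    (hderiv : ∀ x : ℝ, HasDerivAt f (Real.sin θ / (2 * (Real.cosh x - Real.cos θ))) x)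
    (hrange : ∀ x : ℝ, f x ∈ Set.Ioo 0 (Real.pi - θ))
    (hFreal : ∀ x : ℝ, x ≠ 0 → F (x : ℂ) = (f x : ℂ))
    (hF : ∀ z : ℂ, z.re ≠ 0 → -Real.pi < z.im → z.im < Real.pi →
      HasDerivAt F (Complex.sin (θ : ℂ) / (2 * (Complex.cosh z - Complex.cos (θ : ℂ)))) z) :
    ∀ x u β : ℝ, x < 0 → u < 0 → 0 ≤ β → β < Real.pi →
      ((F (Complex.I * (β : ℂ) - (x : ℂ)) - F (Complex.I * (β : ℂ) + (x : ℂ))).re ≥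
        (F (Complex.I * (0 : ℂ) - (x : ℂ)) - F (Complex.I * (0 : ℂ) + (x : ℂ))).re) ∧
      (Tendsto (fun u' : ℝ => f (u' - x) - f (u' + x)) (nhdsWithin 0 (Set.Iio 0))
        (nhds ((F (Complex.I * (0 : ℂ) - (x : ℂ)) - F (Complex.I * (0 : ℂ) + (x : ℂ))).re))) ∧
      ((F (Complex.I * (0 : ℂ) - (x : ℂ)) - F (Complex.I * (0 : ℂ) + (x : ℂ))).re >
        f (u - x) - f (u + x)) :=
  generalized_angle_comparison_general θ hθ f F hderiv hFreal hF
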